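/- (Graver basis property.) Let D = (V, A) be the directed graph of a finite simple graph, and let ℤ(D) be the cycle lattice: integer vectors z ∈ ℤ^A with z_{r(a)} = −z_a for all a and Σ_{w : v→w ∈ A} z_{v→w} = 0 for all v. The set {z(ω) : ω a cycle of D} is exactly the set of minimal elements of ℤ(D) \ {0} with respect to the conformal partial order ⊑: every cycle vector is a nonzero element of ℤ(D) having no nonzero element of ℤ(D) strictly conformally below it, and conversely every nonzero z ∈ ℤ(D) has some cycle vector z(ω) with z(ω) ⊑ z. -/

import Mathlib

open Finset

/-- The arcs of the directed graph `D = (V, A)` associated to a simple graph `G`. -/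
abbrev Arc {V : Type*} (G : SimpleGraph V) : Type _ := {p : V × V // G.Adj p.1 p.2}

/-- The reversed arc. -/
def arcRev {V : Type*} {G : SimpleGraph V} (a : Arc G) : Arc G :=
  ⟨(a.1.2, a.1.1), a.2.symm⟩

/-- The cycle vector of a closed path `ω`: `+1` on the arcs of `ω`, `-1` on their reversals,
`0` elsewhere. -/
def cycVec {V : Type*} [DecidableEq V] (G : SimpleGraph V) {m : ℕ}
    (ω : Fin (m + 1) → V) (a : Arc G) : ℤ :=
  if ∃ i, (ω i, ω (i + 1)) = (a : V × V) then 1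
  else if ∃ i, (ω (i + 1), ω i) = (a : V × V) then -1 else 0

/-!
A cycle vector is a circulation. A circulation conformally below it vanishes off the cycle, so
conservation at each vertex of the cycle makes it constant along the cycle, and the conformal
bounds force that constant to be `1`.

Conversely, if `z` is a nonzero circulation, every arc with positive value is followed by another
one: at its head the reversed arc is negative, so conservation yields a positive outgoing arc.
Following positive arcs is a self-map of a finite set, hence has a periodic orbit; its length is
at least `3` because an arc and its reversal are never both positive, and its cycle vector is
conformally below `z`.
-/

theorem Fin.add_one_add_one_ne {m : ℕ} (hm : 2 ≤ m) (i : Fin (m + 1)) : i + 1 + 1 ≠ i := by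
  rw [add_assoc, Ne, add_eq_left, Fin.ext_iff, Fin.val_add, Fin.val_one']
  simp only [Fin.val_zero, Nat.mod_eq_of_lt (show 1 < m + 1 by omega),
    Nat.mod_eq_of_lt (show 1 + 1 < m + 1 by omega)]
  omega

theorem Fin.apply_eq_apply_zero_of_forall_add_one {m : ℕ} {α : Type*} {f : Fin (m + 1) → α}
    (hf : ∀ i, f (i + 1) = f i) (i : Fin (m + 1)) : f i = f 0 := by
  induction i using Fin.induction with
  | zero => rfl
  | succ i ih => rw [← Fin.coeSucc_eq_succ, hf, ih]

namespace Function

variable {α : Type*} [Finite α]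

theorem exists_mem_periodicPts [Nonempty α] (f : α → α) : ∃ x, x ∈ periodicPts f := by
  obtain ⟨x⟩ := ‹Nonempty α›
  obtain ⟨i, j, hij, hne⟩ : ∃ i j, f^[i] x = f^[j] x ∧ i ≠ j := by
    simpa [Injective] using not_injective_infinite_finite (f^[·] x)
  wlog hlt : i < j generalizing i j
  · exact this j i hij.symm hne.symm (by omega)
  refine ⟨f^[i] x, mk_mem_periodicPts (n := j - i) (by omega) ?_⟩
  rw [IsPeriodicPt, IsFixedPt, ← iterate_add_apply, Nat.sub_add_cancel hlt.le, hij]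

theorem exists_injective_orbit [Nonempty α] (f : α → α) (hf : ∀ x, f (f x) ≠ x) :
    ∃ (m : ℕ) (ω : Fin (m + 1) → α), 2 ≤ m ∧ Injective ω ∧ ∀ k, ω (k + 1) = f (ω k) := by
  obtain ⟨x, hx⟩ := exists_mem_periodicPts f
  obtain ⟨m, hm⟩ : ∃ m, minimalPeriod f x = m + 1 :=
    Nat.exists_eq_succ_of_ne_zero (minimalPeriod_pos_of_mem_periodicPts hx).ne'
  refine ⟨m, fun k => f^[k] x, ?_, ?_, fun k => ?_⟩
  · have hper : f^[m + 1] x = x := hm ▸ iterate_minimalPeriod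
    by_contra! hlt
    interval_cases m
    · exact hf x (by simp_all)
    · exact hf x (by simp_all)
  · intro k l hkl
    exact Fin.ext (iterate_injOn_Iio_minimalPeriod (by simp [hm, Fin.is_le])
      (by simp [hm, Fin.is_le]) hkl)
  · rw [← iterate_succ_apply' f, ← iterate_mod_minimalPeriod_eq, hm]
    simp only [Fin.val_add, Fin.val_one', Nat.add_mod_mod, Nat.succ_eq_add_one]

end Function

section CycleLattice

variable {V : Type*} {G : SimpleGraph V}

def ConformalLE (z₁ z₂ : Arc G → ℤ) : Prop :=
  ∀ a, 0 ≤ z₁ a * z₂ a ∧ |z₁ a| ≤ |z₂ a|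

infix:50 " ⊑ " => ConformalLE

/-- Indices are taken modulo `m + 1`: the last arc of the cycle is `ω m → ω 0`. -/
structure IsCycleSeq (G : SimpleGraph V) {m : ℕ} (ω : Fin (m + 1) → V) : Prop where
  adj : ∀ j, G.Adj (ω j) (ω (j + 1))
  injective : Function.Injective ω
  two_le : 2 ≤ m

section Circulation

variable [Fintype V] [DecidableEq V] [DecidableRel G.Adj]

def outflow (z : Arc G → ℤ) (v : V) : ℤ :=
  ∑ a ∈ univ.filter (fun a : Arc G => (a : V × V).1 = v), z a

/-- Membership in the cycle lattice `ℤ(D)`. -/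
structure IsCirculation (z : Arc G → ℤ) : Prop where
  map_arcRev : ∀ a, z (arcRev a) = -z a
  outflow_eq_zero : ∀ v, outflow z v = 0

end Circulation

namespace IsCycleSeq

variable {m : ℕ} {ω : Fin (m + 1) → V}

def arc (hω : IsCycleSeq G ω) (i : Fin (m + 1)) : Arc G := ⟨(ω i, ω (i + 1)), hω.adj i⟩

theorem pair_ne_swap (hω : IsCycleSeq G ω) (i j : Fin (m + 1)) :
    (ω i, ω (i + 1)) ≠ (ω (j + 1), ω j) := by
  intro h
  obtain ⟨hi, hj⟩ := Prod.mk.inj h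
  rw [hω.injective hi] at hj
  exact Fin.add_one_add_one_ne hω.two_le j (hω.injective hj)

variable [DecidableEq V]

theorem cycVec_arc (hω : IsCycleSeq G ω) (i : Fin (m + 1)) : cycVec G ω (hω.arc i) = 1 :=
  if_pos ⟨i, rfl⟩

theorem cycVec_arcRev (hω : IsCycleSeq G ω) (a : Arc G) :
    cycVec G ω (arcRev a) = -cycVec G ω a := by
  have := hω.pair_ne_swap
  unfold cycVec arcRev
  split_ifs <;> grind

theorem cycVec_arcRev_arc (hω : IsCycleSeq G ω) (i : Fin (m + 1)) :
    cycVec G ω (arcRev (hω.arc i)) = -1 := by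
  rw [hω.cycVec_arcRev, hω.cycVec_arc]

theorem cycVec_ne_zero (hω : IsCycleSeq G ω) : cycVec G ω ≠ 0 :=
  fun h => by simpa [hω.cycVec_arc] using congrFun h (hω.arc 0)

theorem arc_cases (hω : IsCycleSeq G ω) (a : Arc G) :
    (∃ i, a = hω.arc i) ∨ (∃ i, a = arcRev (hω.arc i)) ∨ cycVec G ω a = 0 := by
  unfold cycVec
  split_ifs with hfwd hbwd
  · obtain ⟨i, hi⟩ := hfwd
    exact Or.inl ⟨i, Subtype.ext hi.symm⟩
  · obtain ⟨i, hi⟩ := hbwd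
    exact Or.inr (Or.inl ⟨i, Subtype.ext hi.symm⟩)
  · exact Or.inr (Or.inr rfl)

variable [Fintype V] [DecidableRel G.Adj] {y : Arc G → ℤ}

theorem outflow_apply_eq (hω : IsCycleSeq G ω) (hy : ∀ a, cycVec G ω a = 0 → y a = 0)
    (i : Fin (m + 1)) : outflow y (ω i) = y (hω.arc i) + y (arcRev (hω.arc (i - 1))) := by
  refine sum_eq_add_of_mem _ _ (by simp [arc]) (by simp [arc, arcRev]) ?_ ?_
  · intro h
    have h2 : ω (i + 1) = ω (i - 1) := congrArg (fun a : Arc G => (a : V × V).2) h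
    refine Fin.add_one_add_one_ne hω.two_le i ?_
    rw [hω.injective h2, sub_add_cancel]
  · intro c hc hne
    rw [mem_filter] at hc
    rcases hω.arc_cases c with ⟨j, rfl⟩ | ⟨j, rfl⟩ | h0
    · exact absurd (by rw [hω.injective hc.2]) hne.1
    · exact absurd (by rw [eq_sub_of_add_eq (hω.injective hc.2)]) hne.2
    · exact hy c h0

theorem outflow_eq_zero_of_forall_ne (hω : IsCycleSeq G ω) (hy : ∀ a, cycVec G ω a = 0 → y a = 0)
    {v : V} (hv : ∀ i, ω i ≠ v) : outflow y v = 0 := by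
  refine sum_eq_zero fun a ha => ?_
  rw [mem_filter] at ha
  rcases hω.arc_cases a with ⟨j, rfl⟩ | ⟨j, rfl⟩ | h0
  · exact absurd ha.2 (hv j)
  · exact absurd ha.2 (hv (j + 1))
  · exact hy a h0

theorem isCirculation_cycVec (hω : IsCycleSeq G ω) : IsCirculation (cycVec G ω) where
  map_arcRev := hω.cycVec_arcRev
  outflow_eq_zero v := by
    by_cases hv : ∃ i, ω i = v
    · obtain ⟨i, rfl⟩ := hv
      rw [hω.outflow_apply_eq (fun _ h => h), hω.cycVec_arc, hω.cycVec_arcRev_arc, add_neg_cancel]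
    · exact hω.outflow_eq_zero_of_forall_ne (fun _ h => h) (not_exists.mp hv)

theorem eq_cycVec_of_conformalLE (hω : IsCycleSeq G ω) {z : Arc G → ℤ} (hz : IsCirculation z)
    (hz₀ : z ≠ 0) (hle : z ⊑ cycVec G ω) : z = cycVec G ω := by
  have hsupp : ∀ a, cycVec G ω a = 0 → z a = 0 := fun a h =>
    abs_nonpos_iff.mp (by simpa [h] using (hle a).2)
  -- flow conservation at `ω (i + 1)` forces `z` to take the same value on consecutive arcs
  have hconst : ∀ i, z (hω.arc i) = z (hω.arc 0) :=
    Fin.apply_eq_apply_zero_of_forall_add_one fun i => by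
      have := hω.outflow_apply_eq hsupp (i + 1)
      rw [hz.outflow_eq_zero, add_sub_cancel_right, hz.map_arcRev] at this
      linarith
  have hscale : z = z (hω.arc 0) • cycVec G ω := by
    funext a
    rcases hω.arc_cases a with ⟨i, rfl⟩ | ⟨i, rfl⟩ | h0
    · simp [hconst, hω.cycVec_arc]
    · simp [hz.map_arcRev, hconst, hω.cycVec_arcRev_arc]
    · simp [h0, hsupp a h0]
  have hc : z (hω.arc 0) = 1 := by
    have hne : z (hω.arc 0) ≠ 0 := fun h => hz₀ (by rw [hscale, h, zero_smul])
    obtain ⟨hnonneg, habs⟩ := hle (hω.arc 0)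
    rw [hω.cycVec_arc, abs_one, abs_le] at habs
    rw [hω.cycVec_arc, mul_one] at hnonneg
    omega
  rw [hscale, hc, one_smul]

end IsCycleSeq

theorem conformalLE_cycVec_of_forall_pos [DecidableEq V] {m : ℕ} {ω : Fin (m + 1) → V}
    {z : Arc G → ℤ} (hz : ∀ a, z (arcRev a) = -z a)
    (hpos : ∀ (a : Arc G) i, (a : V × V) = (ω i, ω (i + 1)) → 0 < z a) : cycVec G ω ⊑ z := by
  intro a
  unfold cycVec
  split_ifs with hfwd hbwd
  · obtain ⟨i, hi⟩ := hfwd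
    have := hpos a i hi.symm
    rw [one_mul, abs_one, abs_of_pos this]
    omega
  · obtain ⟨i, hi⟩ := hbwd
    have := hpos (arcRev a) i (by simp [arcRev, ← hi])
    rw [hz] at this
    rw [abs_neg, abs_one, abs_of_neg (by omega)]
    omega
  · simp

namespace IsCirculation

variable [Fintype V] [DecidableEq V] [DecidableRel G.Adj] {z : Arc G → ℤ}

theorem exists_pos (hz : IsCirculation z) (hz₀ : z ≠ 0) : ∃ a, 0 < z a := by
  obtain ⟨a, ha⟩ := Function.ne_iff.mp hz₀
  rcases Ne.lt_or_gt (b := 0) ha with hneg | hpos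
  · exact ⟨arcRev a, by rw [hz.map_arcRev]; omega⟩
  · exact ⟨a, hpos⟩

theorem exists_pos_of_pos (hz : IsCirculation z) {a : Arc G} (ha : 0 < z a) :
    ∃ b : Arc G, (b : V × V).1 = (a : V × V).2 ∧ 0 < z b := by
  obtain ⟨b, hb, hpos⟩ := exists_pos_of_sum_zero_of_exists_nonzero _
    (hz.outflow_eq_zero (a : V × V).2) ⟨arcRev a, by simp [arcRev], by rw [hz.map_arcRev]; omega⟩
  exact ⟨b, (mem_filter.mp hb).2, hpos⟩

theorem exists_isCycleSeq_conformalLE (hz : IsCirculation z) (hz₀ : z ≠ 0) :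
    ∃ (m : ℕ) (ω : Fin (m + 1) → V), IsCycleSeq G ω ∧ cycVec G ω ⊑ z := by
  let S := {v : V // ∃ a : Arc G, (a : V × V).1 = v ∧ 0 < z a}
  choose out hout_fst hout_pos using fun s : S => s.2
  let f : S → S := fun s => ⟨(out s : V × V).2, hz.exists_pos_of_pos (hout_pos s)⟩
  have hout : ∀ s, (out s : V × V) = (s.1, (f s).1) := fun s => Prod.ext (hout_fst s) rfl
  obtain ⟨a₀, ha₀⟩ := hz.exists_pos hz₀
  have : Nonempty S := ⟨⟨_, a₀, rfl, ha₀⟩⟩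
  -- a 2-cycle `s → f s → s` would carry positive flow on an arc and on its reversal
  have hf : ∀ s, f (f s) ≠ s := by
    intro s hs
    have hrev : out (f s) = arcRev (out s) := Subtype.ext (by simp [hout, hs, arcRev])
    have := hout_pos (f s)
    rw [hrev, hz.map_arcRev] at this
    linarith [hout_pos s]
  obtain ⟨m, ω, hm, hinj, hstep⟩ := Function.exists_injective_orbit f hf
  have harc : ∀ k, ((ω k).1, (ω (k + 1)).1) = (out (ω k) : V × V) := fun k => by
    rw [hstep, hout]
  refine ⟨m, fun k => (ω k).1, ⟨fun k => ?_, Subtype.val_injective.comp hinj, hm⟩, ?_⟩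
  · have hadj := (out (ω k)).2
    rwa [← harc] at hadj
  · refine conformalLE_cycVec_of_forall_pos hz.map_arcRev fun a k hk => ?_
    rw [harc] at hk
    exact Subtype.ext hk ▸ hout_pos (ω k)

end IsCirculation

end CycleLattice

theorem stmt_12 {V : Type*} [Fintype V] [DecidableEq V]
    (G : SimpleGraph V) [DecidableRel G.Adj] :
    (∀ (m : ℕ) (ω : Fin (m + 1) → V),
      (∀ j, G.Adj (ω j) (ω (j + 1))) → Function.Injective ω → 2 ≤ m →
      (∀ a : Arc G, cycVec G ω (arcRev a) = - cycVec G ω a) ∧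
      (∀ v : V, (∑ a ∈ univ.filter (fun a : Arc G => (a : V × V).1 = v),
          cycVec G ω a) = 0) ∧
      cycVec G ω ≠ 0 ∧
      (∀ z : Arc G → ℤ, (∀ a, z (arcRev a) = - z a) →
        (∀ v : V, (∑ a ∈ univ.filter (fun a : Arc G => (a : V × V).1 = v), z a) = 0) →
        z ≠ 0 → (∀ a, 0 ≤ z a * cycVec G ω a ∧ |z a| ≤ |cycVec G ω a|) →
        z = cycVec G ω)) ∧
    (∀ z : Arc G → ℤ, (∀ a, z (arcRev a) = - z a) →
      (∀ v : V, (∑ a ∈ univ.filter (fun a : Arc G => (a : V × V).1 = v), z a) = 0) →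
      z ≠ 0 →
      ∃ (m : ℕ) (ω : Fin (m + 1) → V),
        (∀ j, G.Adj (ω j) (ω (j + 1))) ∧ Function.Injective ω ∧ 2 ≤ m ∧
        ∀ a, 0 ≤ cycVec G ω a * z a ∧ |cycVec G ω a| ≤ |z a|) := by
  refine ⟨fun m ω hadj hinj hm => ?_, fun z hrev hflow hz₀ => ?_⟩
  · have hω : IsCycleSeq G ω := ⟨hadj, hinj, hm⟩
    exact ⟨hω.cycVec_arcRev, hω.isCirculation_cycVec.outflow_eq_zero, hω.cycVec_ne_zero,
      fun z hrev hflow hz₀ hle => hω.eq_cycVec_of_conformalLE ⟨hrev, hflow⟩ hz₀ hle⟩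
  · obtain ⟨m, ω, hω, hle⟩ := IsCirculation.exists_isCycleSeq_conformalLE ⟨hrev, hflow⟩ hz₀
    exact ⟨m, ω, hω.adj, hω.injective, hω.two_le, hle⟩
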